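/- Let H_1 be an r_1-regular graph and suppose m − 1 = p(r_1 − 1) for some integer p, where p ≥ 3 and r_1 ≥ 2. Let G = G[F,V_k,H_v] and G* = G[F,V_k,H_v*] with |V_k| = k, where H_v* is the graph H_v whose deleted graph H_1 is replaced by G_p^{r_1} = C_p □ K_{r_1−1}. Let α, β be the two roots of x² − r_1 x − (m−1) = 0. Then the multiset σ(A(G)) equals the union of: (a) each λ ∈ σ(A(H_v)) \ {α, β} taken with multiplicity k, and (b) the multiset obtained from σ(A(G*)) by removing k copies of each eigenvalue λ_j(G_p^{r_1}), j = 1,…,m−2 (i.e. all eigenvalues of A(G_p^{r_1}) except its largest eigenvalue r_1). -/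

import Mathlib

open Matrix BigOperators
open scoped Classical

/-- The adjacency matrix of a simple graph, with entries in `R`. -/
noncomputable def adjMat (R : Type*) [Zero R] [One R] {V : Type*} [Fintype V]
    (G : SimpleGraph V) : Matrix V V R :=
  Matrix.of fun x y => if G.Adj x y then (1 : R) else 0

/-- The degree of a vertex. -/
noncomputable def gdeg {V : Type*} [Fintype V] (G : SimpleGraph V) (x : V) : ℕ :=
  (Finset.univ.filter fun y => G.Adj x y).card

/-- `G` is `r`-regular. -/
def IsReg {V : Type*} [Fintype V] (G : SimpleGraph V) (r : ℕ) : Prop :=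
  ∀ x, gdeg G x = r

/-- The signless Laplacian matrix `Q(G) = D(G) + A(G)`. -/
noncomputable def qMat (R : Type*) [AddMonoidWithOne R] {V : Type*} [Fintype V]
    (G : SimpleGraph V) : Matrix V V R :=
  Matrix.diagonal (fun x => (gdeg G x : R)) + adjMat R G

/-- The adjacency spectrum, as the multiset of real roots (with multiplicity) of the
characteristic polynomial of the (real symmetric) adjacency matrix. -/
noncomputable def aSpec {V : Type*} [Fintype V] (G : SimpleGraph V) : Multiset ℝ :=
  (adjMat ℝ G).charpoly.roots

/-- The signless Laplacian spectrum. -/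
noncomputable def qSpec {V : Type*} [Fintype V] (G : SimpleGraph V) : Multiset ℝ :=
  (qMat ℝ G).charpoly.roots

/-- The `M`-coronal `Γ_M(x) = 1ᵀ (xI − M)⁻¹ 1`, the sum of the entries of `(xI − M)⁻¹`. -/
noncomputable def coronal {n R : Type*} [Fintype n] [DecidableEq n] [Field R]
    (M : Matrix n n R) (x : R) : R :=
  ∑ i, ∑ j, ((x • (1 : Matrix n n R) - M)⁻¹) i j

/-- Embeds a `P × P` matrix as a `V × V` matrix supported on the image of `g`, zero elsewhere.
If the vertices of `V` are ordered listing the image of `g` first, this is `diag(M, 0)`. -/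
noncomputable def embedMatrix {P V R : Type*} [Fintype P] [AddCommMonoid R]
    (g : P → V) (M : Matrix P P R) : Matrix V V R :=
  Matrix.of fun x y => ∑ px : P, ∑ py : P, if x = g px ∧ y = g py then M px py else 0

/-- The graph `H − v` obtained by deleting the vertex `v`. -/
def delVert {W : Type*} (H : SimpleGraph W) (v : W) : SimpleGraph {w : W // w ≠ v} :=
  H.comap Subtype.val

/-- The graph `H − {u,v}` obtained by deleting the two vertices `u, v`. -/
def delVert2 {W : Type*} (H : SimpleGraph W) (u v : W) :
    SimpleGraph {w : W // w ≠ u ∧ w ≠ v} :=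
  H.comap Subtype.val

/-- The join `G₁ ∨ G₂` of two vertex-disjoint graphs: their disjoint union together with all
edges between the two parts. -/
def sgJoin {α β : Type*} (G₁ : SimpleGraph α) (G₂ : SimpleGraph β) : SimpleGraph (α ⊕ β) where
  Adj x y :=
    match x, y with
    | Sum.inl a, Sum.inl b => G₁.Adj a b
    | Sum.inl _, Sum.inr _ => True
    | Sum.inr _, Sum.inl _ => True
    | Sum.inr a, Sum.inr b => G₂.Adj a b
  symm := by
    constructor
    rintro (a | a) (b | b) h
    · exact G₁.adj_symm h
    · trivial
    · trivial
    · exact G₂.adj_symm h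
  loopless := by
    constructor
    rintro (a | a) h
    · exact G₁.irrefl h
    · exact G₂.irrefl h

/-- The graph `G[F, V_k, H_v]` with `k` pockets: take one copy of `F` and `k` disjoint copies
of `H` (with specified vertex `v`), identifying the vertex `v` of the `i`-th copy with the
vertex `f i` of `F`.  The `i`-th copy of `H − v` is carried by `{i} × {w // w ≠ v}`. -/
def pocketGraph {V W : Type*} (F : SimpleGraph V) (H : SimpleGraph W) (v : W)
    {k : ℕ} (f : Fin k ↪ V) : SimpleGraph (V ⊕ (Fin k × {w : W // w ≠ v})) where
  Adj x y :=
    match x, y with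
    | Sum.inl a, Sum.inl b => F.Adj a b
    | Sum.inl a, Sum.inr (i, w) => a = f i ∧ H.Adj v w.1
    | Sum.inr (i, w), Sum.inl a => a = f i ∧ H.Adj v w.1
    | Sum.inr (i, w), Sum.inr (j, w') => i = j ∧ H.Adj w.1 w'.1
  symm := by
    constructor
    rintro (a | ⟨i, w⟩) (b | ⟨j, w'⟩) h
    · exact F.adj_symm h
    · exact h
    · exact h
    · exact ⟨h.1.symm, H.adj_symm h.2⟩
  loopless := by
    constructor
    rintro (a | ⟨i, w⟩) h
    · exact F.irrefl h
    · exact H.irrefl h.2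

/-- The graph `G[F, E_k, H_{uv}]` with `k` edge-pockets: take one copy of `F` and `k` disjoint
copies of `H` (with specified edge `uv`), pasting the edge `uv` of the `i`-th copy onto the
edge `e_i = (a i)(b i)` of `F` (identifying `u` with `a i` and `v` with `b i`).  The `i`-th
copy of `H − {u,v}` is carried by `{i} × {w // w ≠ u ∧ w ≠ v}`. -/
def edgePocketGraph {V W : Type*} (F : SimpleGraph V) (H : SimpleGraph W) (u v : W)
    {k : ℕ} (a b : Fin k → V) :
    SimpleGraph (V ⊕ (Fin k × {w : W // w ≠ u ∧ w ≠ v})) where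
  Adj x y :=
    match x, y with
    | Sum.inl s, Sum.inl t => F.Adj s t
    | Sum.inl s, Sum.inr (i, w) => (s = a i ∧ H.Adj u w.1) ∨ (s = b i ∧ H.Adj v w.1)
    | Sum.inr (i, w), Sum.inl s => (s = a i ∧ H.Adj u w.1) ∨ (s = b i ∧ H.Adj v w.1)
    | Sum.inr (i, w), Sum.inr (j, w') => i = j ∧ H.Adj w.1 w'.1
  symm := by
    constructor
    rintro (s | ⟨i, w⟩) (t | ⟨j, w'⟩) h
    · exact F.adj_symm h
    · exact h
    · exact h
    · exact ⟨h.1.symm, H.adj_symm h.2⟩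
  loopless := by
    constructor
    rintro (s | ⟨i, w⟩) h
    · exact F.irrefl h
    · exact H.irrefl h.2


/-! The adjacency matrix `A₁` of `H − v` has the all-ones vector `𝟙` as an eigenvector with
eigenvalue `r₁`. Conjugating `A(G[F,V_k,H_v])` by the matrix that sends, in every pocket, the
basis vector of a fixed vertex `w₀` to the all-ones vector of that pocket makes it block
triangular. One diagonal block is the quotient matrix of the partition of the vertices into
those of `F` and the `k` pockets; the other consists of `k` copies of the matrix of `A₁` on
`ℝ^(W ∖ v) ⧸ ⟨𝟙⟩`, whose spectrum is `σ(A₁)` with one copy of `r₁` removed. The quotient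
matrix sees `H` only through `m` and `r₁`, so `G` and `G*` share it, and for `H_v` itself
(`F` a single vertex, `k = 1`) it is `!![0, m - 1; 1, r₁]`, with eigenvalues `α, β`. -/

open Polynomial Kronecker

namespace Matrix

variable {R : Type*} [CommRing R]

theorem charpoly_mul_mul_of_mul_eq_one {n : Type*} [Fintype n] [DecidableEq n]
    {P Q : Matrix n n R} (hPQ : P * Q = 1) (A : Matrix n n R) :
    (Q * A * P).charpoly = A.charpoly := by
  rw [charpoly_mul_comm, ← mul_assoc, hPQ, one_mul]

theorem charpoly_eq_mul_of_toBlocks₂₁_eq_zero {m n : Type*} [Fintype m] [DecidableEq m]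
    [Fintype n] [DecidableEq n] (M : Matrix (m ⊕ n) (m ⊕ n) R) (h : M.toBlocks₂₁ = 0) :
    M.charpoly = M.toBlocks₁₁.charpoly * M.toBlocks₂₂.charpoly := by
  rw [← charpoly_fromBlocks_zero₂₁ (M₁₂ := M.toBlocks₁₂), ← h, fromBlocks_toBlocks]

theorem charpoly_one_kronecker {n K : Type*} [Fintype n] [DecidableEq n] [Fintype K]
    [DecidableEq K] (N : Matrix n n R) :
    ((1 : Matrix K K R) ⊗ₖ N).charpoly = N.charpoly ^ Fintype.card K := by
  have : charmatrix ((1 : Matrix K K R) ⊗ₖ N) = (1 : Matrix K K R[X]) ⊗ₖ charmatrix N := by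
    ext ⟨i, a⟩ ⟨j, b⟩ : 1
    by_cases hij : i = j <;> by_cases hab : a = b <;> simp [hij, hab]
  rw [charpoly, this, det_kronecker, det_one, one_pow, one_mul, charpoly]

section Deflation

variable {W : Type*} [Fintype W] [DecidableEq W]

/-- The matrix of `A` on `R^W ⧸ R ∙ 𝟙` in the basis given by the images of the `e y`, `y ≠ w₀`.
When `𝟙` is an eigenvector of `A` it carries the rest of the spectrum. -/
def deflate (A : Matrix W W R) (w₀ : W) : Matrix {w // w ≠ w₀} {w // w ≠ w₀} R :=
  of fun x y => A x y - A w₀ y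

/-- `1 + shearOnes w₀` is the identity with column `w₀` replaced by `𝟙`. -/
def shearOnes (w₀ : W) : Matrix W W R := of fun x y => if x ≠ w₀ ∧ y = w₀ then 1 else 0

theorem one_add_shearOnes_mul_one_sub_shearOnes (w₀ : W) :
    (1 + shearOnes w₀ : Matrix W W R) * (1 - shearOnes w₀) = 1 := by
  have : (shearOnes w₀ : Matrix W W R) * shearOnes w₀ = 0 := by
    ext x y
    simp only [shearOnes, mul_apply, of_apply, zero_apply]
    exact Finset.sum_eq_zero fun z _ => by by_cases hz : z = w₀ <;> simp [hz]
  simp only [mul_sub, add_mul, mul_one, one_mul, this]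
  abel

omit [Fintype W] in
theorem one_add_shearOnes_apply_self (w₀ x : W) : (1 + shearOnes w₀ : Matrix W W R) x w₀ = 1 := by
  by_cases hx : x = w₀ <;> simp [shearOnes, hx]

theorem sum_one_add_shearOnes_apply (w₀ y : W) :
    ∑ x, (1 + shearOnes w₀ : Matrix W W R) x y = if y = w₀ then (Fintype.card W : R) else 1 := by
  by_cases hy : y = w₀
  · subst hy
    simp only [one_add_shearOnes_apply_self]
    simp
  · simp [shearOnes, one_apply, hy]

theorem sum_one_sub_shearOnes_apply (w₀ x : W) :
    ∑ y, (1 - shearOnes w₀ : Matrix W W R) x y = if x = w₀ then 1 else 0 := by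
  by_cases hx : x = w₀ <;> simp [shearOnes, one_apply, hx, Finset.sum_sub_distrib]

variable {A : Matrix W W R} {r : R}

theorem conj_shearOnes_apply_self (hA : ∀ x, ∑ y, A x y = r) (w₀ x : W) :
    ((1 - shearOnes w₀) * A * (1 + shearOnes w₀) : Matrix W W R) x w₀ =
      if x = w₀ then r else 0 := by
  have hcol : ∀ z, (A * (1 + shearOnes w₀) : Matrix W W R) z w₀ = r := fun z => by
    simp only [mul_apply, one_add_shearOnes_apply_self, mul_one, hA]
  rw [mul_assoc, mul_apply]
  simp only [hcol, ← Finset.sum_mul, sum_one_sub_shearOnes_apply]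
  simp

theorem conj_shearOnes_apply_of_ne (w₀ : W) {x y : W} (hx : x ≠ w₀) (hy : y ≠ w₀) :
    ((1 - shearOnes w₀) * A * (1 + shearOnes w₀) : Matrix W W R) x y =
      deflate A w₀ ⟨x, hx⟩ ⟨y, hy⟩ := by
  simp [deflate, shearOnes, mul_apply, sub_mul, hx, hy, ite_and, one_apply]

def splitOffEquiv (w₀ : W) : W ≃ {w // w ≠ w₀} ⊕ Unit :=
  (Equiv.optionSubtypeNe w₀).symm.trans (Equiv.optionEquivSumPUnit _)

theorem charpoly_eq_X_sub_C_mul_charpoly_deflate (hA : ∀ x, ∑ y, A x y = r) (w₀ : W) :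
    A.charpoly = (X - C r) * (deflate A w₀).charpoly := by
  set D := ((1 - shearOnes w₀) * A * (1 + shearOnes w₀) : Matrix W W R)
  have hblocks : reindex (splitOffEquiv w₀) (splitOffEquiv w₀) D =
      fromBlocks (deflate A w₀) 0 (of fun _ y => D w₀ y) (of fun _ _ => r) := by
    ext (x | x) (y | y)
    · simp [splitOffEquiv, D, conj_shearOnes_apply_of_ne w₀ x.2 y.2]
    · simp [splitOffEquiv, D, conj_shearOnes_apply_self hA, x.2]
    · simp [splitOffEquiv]
    · simp [splitOffEquiv, D, conj_shearOnes_apply_self hA]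
  rw [← charpoly_mul_mul_of_mul_eq_one (one_add_shearOnes_mul_one_sub_shearOnes w₀) A,
    ← charpoly_reindex (splitOffEquiv w₀), hblocks, charpoly_fromBlocks_zero₁₂, mul_comm]
  congr 1
  rw [charpoly, det_unique, charmatrix_apply_eq, of_apply]

theorem roots_charpoly_deflate [IsDomain R] (hA : ∀ x, ∑ y, A x y = r) (w₀ : W) :
    (deflate A w₀).charpoly.roots = A.charpoly.roots.erase r := by
  rw [charpoly_eq_X_sub_C_mul_charpoly_deflate hA w₀,
    roots_mul (mul_ne_zero (X_sub_C_ne_zero r) (charpoly_monic _).ne_zero), roots_X_sub_C,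
    Multiset.singleton_add, Multiset.erase_cons_head]

end Deflation

section Pocket

variable {V K W : Type*} [Fintype V] [DecidableEq V] [Fintype K] [DecidableEq K] [Fintype W]
  [DecidableEq W]

def pocketMatrix (F : Matrix V V R) (c : Matrix V K R) (d : Matrix K V R) (A₁ : Matrix W W R) :
    Matrix (V ⊕ K × W) (V ⊕ K × W) R :=
  fromBlocks F (of fun b q => c b q.1) (of fun q a => d q.1 a) (1 ⊗ₖ A₁)

/-- For `A₁` with constant row sums `r` and `n = |W|`, this is the quotient matrix of
`pocketMatrix F c d A₁` for the partition into the singletons of `V` and the pockets. -/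
def pocketQuotient (F : Matrix V V R) (c : Matrix V K R) (d : Matrix K V R) (n r : R) :
    Matrix (V ⊕ K) (V ⊕ K) R :=
  fromBlocks F (n • c) d (r • 1)

variable (F : Matrix V V R) (c : Matrix V K R) (d : Matrix K V R)

omit [DecidableEq W] in
theorem conj_pocketMatrix (A₁ P Q : Matrix W W R) :
    fromBlocks 1 0 0 (1 ⊗ₖ Q) * pocketMatrix F c d A₁ * fromBlocks 1 0 0 (1 ⊗ₖ P) =
      fromBlocks F (of fun b q => c b q.1 * ∑ w, P w q.2)
        (of fun q a => (∑ w, Q q.2 w) * d q.1 a) (1 ⊗ₖ (Q * A₁ * P)) := by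
  rw [pocketMatrix, fromBlocks_multiply, fromBlocks_multiply]
  simp only [← mul_kronecker_mul, Matrix.one_mul, Matrix.mul_one, Matrix.zero_mul,
    Matrix.mul_zero, add_zero, zero_add]
  congr 1
  · ext b ⟨i, w⟩
    simp [mul_apply, Fintype.sum_prod_type, one_apply, Finset.mul_sum]
  · ext ⟨j, x⟩ a
    simp [mul_apply, Fintype.sum_prod_type, one_apply, Finset.sum_mul]

def pocketEquiv (w₀ : W) : V ⊕ K × W ≃ (V ⊕ K) ⊕ K × {w // w ≠ w₀} where
  toFun := Sum.elim (Sum.inl ∘ Sum.inl) fun q =>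
    if h : q.2 = w₀ then Sum.inl (Sum.inr q.1) else Sum.inr (q.1, ⟨q.2, h⟩)
  invFun := Sum.elim (Sum.elim Sum.inl fun i => Sum.inr (i, w₀)) fun q => Sum.inr (q.1, q.2.1)
  left_inv := by
    rintro (a | ⟨i, w⟩)
    · rfl
    · by_cases h : w = w₀ <;> simp [h]
  right_inv := by
    rintro ((a | i) | ⟨i, w, hw⟩)
    · rfl
    · simp
    · simp [hw]

theorem charpoly_pocketMatrix {A₁ : Matrix W W R} {r : R} (hA : ∀ x, ∑ y, A₁ x y = r)
    (w₀ : W) :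
    (pocketMatrix F c d A₁).charpoly =
      (pocketQuotient F c d (Fintype.card W) r).charpoly *
        (deflate A₁ w₀).charpoly ^ Fintype.card K := by
  have hPQ : (fromBlocks 1 0 0 (1 ⊗ₖ (1 + shearOnes w₀)) *
      fromBlocks 1 0 0 (1 ⊗ₖ (1 - shearOnes w₀)) : Matrix (V ⊕ K × W) (V ⊕ K × W) R) =
        1 := by
    rw [fromBlocks_multiply, ← mul_kronecker_mul, one_add_shearOnes_mul_one_sub_shearOnes]
    simp
  rw [← charpoly_mul_mul_of_mul_eq_one hPQ, conj_pocketMatrix,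
    ← charpoly_reindex (pocketEquiv w₀), charpoly_eq_mul_of_toBlocks₂₁_eq_zero,
    ← charpoly_one_kronecker]
  · congr 2
    · ext (b | i) (a | j) <;>
        simp [toBlocks₁₁, pocketEquiv, pocketQuotient, -add_apply, -sub_apply,
          sum_one_add_shearOnes_apply, sum_one_sub_shearOnes_apply, conj_shearOnes_apply_self hA,
          one_apply, mul_comm]
    · ext ⟨i, x⟩ ⟨j, y⟩
      simp [toBlocks₂₂, pocketEquiv, conj_shearOnes_apply_of_ne w₀ x.2 y.2, one_apply]
  · ext ⟨i, x⟩ (a | j) <;>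
      simp [toBlocks₂₁, pocketEquiv, -sub_apply, sum_one_sub_shearOnes_apply,
        conj_shearOnes_apply_self hA, x.2]

end Pocket

theorem charpoly_pocketQuotient_unit [Nontrivial R] (e : Fin 1 ↪ Unit) (n r : R) :
    (pocketQuotient (0 : Matrix Unit Unit R) ((1 : Matrix Unit Unit R).submatrix id e)
      ((1 : Matrix Unit Unit R).submatrix e id) n r).charpoly = X ^ 2 - C r * X - C n := by
  let σ : Unit ⊕ Fin 1 ≃ Fin 2 :=
    (Equiv.sumCongr (Equiv.ofUnique Unit (Fin 1)) (Equiv.refl _)).trans finSumFinEquiv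
  have h₀ : σ.symm 0 = Sum.inl () := rfl
  have h₁ : σ.symm 1 = Sum.inr 0 := rfl
  rw [← charpoly_reindex σ, charpoly_fin_two, trace_fin_two, det_fin_two]
  simp [h₀, h₁, pocketQuotient]
  ring

end Matrix

open Matrix

section Graphs

variable {V W : Type*} [Fintype V] [Fintype W]

theorem sum_adjMat_apply {R : Type*} [AddCommMonoidWithOne R] (G : SimpleGraph V) (x : V) :
    ∑ y, adjMat R G x y = gdeg G x := by
  simp only [adjMat, of_apply, Finset.sum_boole, gdeg]

theorem gdeg_eq_degree (G : SimpleGraph V) [DecidableRel G.Adj] (x : V) :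
    gdeg G x = G.degree x := by
  rw [gdeg, SimpleGraph.degree, SimpleGraph.neighborFinset_eq_filter]
  congr!

theorem adjMat_bot (R : Type*) [Zero R] [One R] : adjMat R (⊥ : SimpleGraph V) = 0 := by
  ext
  simp [adjMat]

theorem aSpec_eq_roots_charpoly [DecidableEq V] (G : SimpleGraph V) :
    aSpec G = (adjMat ℝ G).charpoly.roots := by
  unfold aSpec
  congr!

theorem aSpec_congr {G : SimpleGraph V} {G' : SimpleGraph W} (e : G ≃g G') :
    aSpec G = aSpec G' := by
  classical
  have : adjMat ℝ G = reindex e.toEquiv.symm e.toEquiv.symm (adjMat ℝ G') := by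
    ext x y
    exact if_congr e.map_adj_iff.symm rfl rfl
  rw [aSpec_eq_roots_charpoly, aSpec_eq_roots_charpoly, this, charpoly_reindex]

theorem IsReg.of_iso {G : SimpleGraph V} {G' : SimpleGraph W} (e : G ≃g G') {r : ℕ}
    (h : IsReg G' r) : IsReg G r := by
  classical
  intro x
  rw [gdeg_eq_degree, ← e.degree_eq, ← gdeg_eq_degree]
  exact h _

theorem isReg_cycleGraph_boxProd_top {p : ℕ} (hp : 3 ≤ p) (r : ℕ) :
    IsReg ((SimpleGraph.cycleGraph p).boxProd (⊤ : SimpleGraph (Fin r))) (r + 1) := by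
  classical
  obtain ⟨n, rfl⟩ : ∃ n, p = n + 3 := ⟨p - 3, by omega⟩
  intro x
  have := x.2.pos
  rw [gdeg_eq_degree, SimpleGraph.degree_boxProd, SimpleGraph.cycleGraph_degree_three_le,
    SimpleGraph.complete_graph_degree, Fintype.card_fin]
  omega

def delVertJoinIso {X : Type*} (G₁ : SimpleGraph Unit) (B : SimpleGraph X) :
    delVert (sgJoin G₁ B) (Sum.inl ()) ≃g B where
  toFun
    | ⟨Sum.inl (), h⟩ => absurd rfl h
    | ⟨Sum.inr b, _⟩ => b
  invFun b := ⟨Sum.inr b, Sum.inr_ne_inl⟩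
  left_inv
    | ⟨Sum.inl (), h⟩ => absurd rfl h
    | ⟨Sum.inr _, _⟩ => rfl
  right_inv _ := rfl
  map_rel_iff' {x y} := by
    rcases x with ⟨_ | b, hx⟩
    · exact absurd rfl hx
    rcases y with ⟨_ | c, hy⟩
    · exact absurd rfl hy
    rfl

variable [DecidableEq V] [DecidableEq W] {k : ℕ}

def pocketGraphUnitIso (H : SimpleGraph W) (v : W) (e : Fin 1 ↪ Unit) :
    pocketGraph (⊥ : SimpleGraph Unit) H v e ≃g H where
  toFun := Sum.elim (fun _ => v) fun q => q.2.1
  invFun w := if h : w = v then Sum.inl () else Sum.inr (0, ⟨w, h⟩)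
  left_inv := by
    rintro (_ | ⟨i, w, hw⟩)
    · simp
    · simp [hw, Subsingleton.elim i 0]
  right_inv w := by by_cases h : w = v <;> simp [h]
  map_rel_iff' {x y} := by
    rcases x with _ | ⟨i, w⟩ <;> rcases y with _ | ⟨j, w'⟩
    · simp [pocketGraph]
    · simp [pocketGraph]
    · simp [pocketGraph, H.adj_comm]
    · simp [pocketGraph, Subsingleton.elim i j]

theorem adjMat_pocketGraph {R : Type*} [CommRing R] (F : SimpleGraph V) {H : SimpleGraph W}
    {v : W} (f : Fin k ↪ V) (hdeg : ∀ w, w ≠ v → H.Adj v w) :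
    adjMat R (pocketGraph F H v f) =
      pocketMatrix (adjMat R F) ((1 : Matrix V V R).submatrix id f)
        ((1 : Matrix V V R).submatrix f id) (adjMat R (delVert H v)) := by
  ext (a | ⟨i, w⟩) (b | ⟨j, w'⟩)
  · rfl
  · simp [adjMat, pocketMatrix, pocketGraph, one_apply, hdeg w'.1 w'.2]
  · simp [adjMat, pocketMatrix, pocketGraph, one_apply, hdeg w.1 w.2, eq_comm]
  · by_cases hij : i = j <;> simp [adjMat, pocketMatrix, pocketGraph, one_apply, delVert, hij]

theorem aSpec_pocketGraph (F : SimpleGraph V) {H : SimpleGraph W} {v : W} {r : ℕ}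
    (f : Fin k ↪ V) (hdeg : ∀ w, w ≠ v → H.Adj v w) (hreg : IsReg (delVert H v) r)
    (hv : ∃ w, w ≠ v) :
    aSpec (pocketGraph F H v f) =
      (pocketQuotient (adjMat ℝ F) ((1 : Matrix V V ℝ).submatrix id f)
        ((1 : Matrix V V ℝ).submatrix f id) (Fintype.card {w // w ≠ v}) r).charpoly.roots +
      k • (aSpec (delVert H v)).erase (r : ℝ) := by
  obtain ⟨w₀, hw₀⟩ := hv
  have hrow : ∀ x, ∑ y, adjMat ℝ (delVert H v) x y = r := fun x => by
    rw [sum_adjMat_apply, hreg x]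
  rw [aSpec_eq_roots_charpoly, adjMat_pocketGraph F f hdeg,
    charpoly_pocketMatrix _ _ _ hrow ⟨w₀, hw₀⟩, roots_mul, roots_pow, Fintype.card_fin,
    roots_charpoly_deflate hrow, aSpec_eq_roots_charpoly]
  exact mul_ne_zero (charpoly_monic _).ne_zero (pow_ne_zero _ (charpoly_monic _).ne_zero)

theorem aSpec_eq_cons_cons_erase_of_isReg_delVert {H : SimpleGraph W} {v : W} {r : ℕ}
    (hdeg : ∀ w, w ≠ v → H.Adj v w) (hreg : IsReg (delVert H v) r) (hv : ∃ w, w ≠ v)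
    {α β : ℝ}
    (hαβ : ∀ x : ℝ, x ^ 2 - r * x - ((Fintype.card W : ℝ) - 1) = (x - α) * (x - β)) :
    aSpec H = α ::ₘ β ::ₘ (aSpec (delVert H v)).erase (r : ℝ) := by
  let e : Fin 1 ↪ Unit := (Equiv.ofUnique (Fin 1) Unit).toEmbedding
  have hcard : (Fintype.card {w // w ≠ v} : ℝ) = (Fintype.card W : ℝ) - 1 := by
    have : 0 < Fintype.card W := Fintype.card_pos_iff.mpr ⟨v⟩
    simp [Fintype.card_subtype_compl, Nat.cast_sub this]
  have hquot : X ^ 2 - C (r : ℝ) * X - C ((Fintype.card W : ℝ) - 1) = (X - C α) * (X - C β) :=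
    Polynomial.funext fun x => by simpa using hαβ x
  rw [← aSpec_congr (pocketGraphUnitIso H v e), aSpec_pocketGraph _ e hdeg hreg hv, adjMat_bot,
    charpoly_pocketQuotient_unit, hcard, hquot,
    roots_mul (mul_ne_zero (X_sub_C_ne_zero α) (X_sub_C_ne_zero β)), roots_X_sub_C,
    roots_X_sub_C, one_smul, add_assoc, Multiset.singleton_add, Multiset.singleton_add]

end Graphs

theorem adj_spec_pocketGraph_vs_cycleCompleteModel_general
    {V W : Type*} [Fintype V] [Fintype W] [DecidableEq W]
    (m k p r₁ : ℕ) (hm : Fintype.card W = m) (hp : 3 ≤ p) (hr₁ : 2 ≤ r₁)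
    (hmp : m - 1 = p * (r₁ - 1))
    (F : SimpleGraph V) (H : SimpleGraph W) (v : W)
    (hdeg : ∀ w : W, w ≠ v → H.Adj v w)
    (hreg : IsReg (delVert H v) r₁)
    (f : Fin k ↪ V)
    (α β : ℝ)
    (hαβ : ∀ x : ℝ, x ^ 2 - (r₁ : ℝ) * x - ((m : ℝ) - 1) = (x - α) * (x - β)) :
    aSpec (pocketGraph F H v f)
      = k • (((aSpec H).erase α).erase β)
        + (aSpec (pocketGraph F
              (sgJoin (⊤ : SimpleGraph Unit)
                ((SimpleGraph.cycleGraph p).boxProd (⊤ : SimpleGraph (Fin (r₁ - 1)))))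
              (Sum.inl ()) f)
            - k • ((aSpec ((SimpleGraph.cycleGraph p).boxProd
                (⊤ : SimpleGraph (Fin (r₁ - 1))))).erase (r₁ : ℝ))) := by
  subst hm
  set B := (SimpleGraph.cycleGraph p).boxProd (⊤ : SimpleGraph (Fin (r₁ - 1)))
  have hB : IsReg B r₁ := by
    simpa [Nat.sub_add_cancel (by omega : 1 ≤ r₁)] using
      isReg_cycleGraph_boxProd_top hp (r₁ - 1)
  have hsize : 3 ≤ Fintype.card W - 1 := hmp ▸ le_mul_of_le_of_one_le hp (by omega)
  have hcard : Fintype.card {w : Unit ⊕ (Fin p × Fin (r₁ - 1)) // w ≠ Sum.inl ()} =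
      Fintype.card {w // w ≠ v} := by
    simp [Fintype.card_congr (delVertJoinIso ⊤ B).toEquiv, hmp]
  have hv : ∃ w, w ≠ v := Fintype.exists_ne_of_one_lt_card (by omega) v
  have hvB : ∃ w, w ≠ (Sum.inl () : Unit ⊕ (Fin p × Fin (r₁ - 1))) :=
    Fintype.exists_ne_of_one_lt_card (by simp; omega) _
  have hdegB : ∀ w, w ≠ Sum.inl () → (sgJoin ⊤ B).Adj (Sum.inl ()) w := by
    rintro (_ | _) h
    · exact absurd rfl h
    · trivial
  rw [aSpec_pocketGraph F f hdeg hreg hv,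
    aSpec_pocketGraph F f hdegB (hB.of_iso (delVertJoinIso ⊤ B)) hvB,
    aSpec_eq_cons_cons_erase_of_isReg_delVert hdeg hreg hv hαβ,
    aSpec_congr (delVertJoinIso ⊤ B), hcard, Multiset.erase_cons_head, Multiset.erase_cons_head,
    add_tsub_cancel_right, add_comm]

/-- Corollary 3.4. -/
theorem adj_spec_pocketGraph_vs_cycleCompleteModel
    {V W : Type*} [Fintype V] [DecidableEq V] [Fintype W] [DecidableEq W]
    (m k p r₁ : ℕ) (hm : Fintype.card W = m) (hp : 3 ≤ p) (hr₁ : 2 ≤ r₁)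
    (hmp : m - 1 = p * (r₁ - 1))
    (F : SimpleGraph V) (H : SimpleGraph W) (v : W)
    (hdeg : ∀ w : W, w ≠ v → H.Adj v w)
    (hreg : IsReg (delVert H v) r₁)
    (f : Fin k ↪ V)
    (α β : ℝ)
    (hαβ : ∀ x : ℝ, x ^ 2 - (r₁ : ℝ) * x - ((m : ℝ) - 1) = (x - α) * (x - β)) :
    aSpec (pocketGraph F H v f)
      = k • (((aSpec H).erase α).erase β)
        + (aSpec (pocketGraph F
              (sgJoin (⊤ : SimpleGraph Unit)
                ((SimpleGraph.cycleGraph p).boxProd (⊤ : SimpleGraph (Fin (r₁ - 1)))))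
              (Sum.inl ()) f)
            - k • ((aSpec ((SimpleGraph.cycleGraph p).boxProd
                (⊤ : SimpleGraph (Fin (r₁ - 1))))).erase (r₁ : ℝ))) :=
  adj_spec_pocketGraph_vs_cycleCompleteModel_general m k p r₁ hm hp hr₁ hmp F H v hdeg hreg f α β
    hαβ
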